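/- Let v : ℝ → ℝ̄ be an upper semicontinuous function such that J[|v|] < +∞, i.e., x ↦ v(x)/(π(1+x²)) is Lebesgue summable on ℝ. Then the function on ℂ defined as the Poisson integral (𝒫v)(z) := (1/π)∫_{−∞}^{+∞} |Im z| v(x) / ((Im z)² + (Re z − x)²) dx for z ∈ ℂ \ ℝ and as v(z) for z ∈ ℝ is upper semicontinuous on ℂ; moreover, if v is continuous on ℝ, this function is continuous on ℂ. -/

import Mathlib

/-! Off the real axis the Poisson integral is continuous by dominated convergence: if `|z - x|`
stays bounded below and `Re z` bounded, the kernel `|Im z| / |z - x|²` is `O(|Im z| / (1 + x²))`,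
and `v / (1 + x²)` is integrable.

At a real point `x₀` with `v x₀ < y' < y`, the kernel has total mass `π`, so
`𝒫v - y' = 𝒫(v - y')`. By upper semicontinuity `v - y' ≤ 0` on a neighbourhood of `x₀`, which
contributes nothing positive, while outside it the same kernel bound gives
`𝒫(v - y')(z) ≤ K |Im z| → 0`. Hence `𝒫v < y` near `x₀`. If `v` is continuous, the same applies
to `-v`, making the extension lower semicontinuous as well. -/

open MeasureTheory Filter Metric Complex ENNReal

noncomputable section

/-- A function `u : ℂ → ℝ` is subharmonic if it is upper semicontinuous and satisfies
the sub-mean value inequality on every circle. -/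
def Subharmonic (u : ℂ → ℝ) : Prop :=
  UpperSemicontinuous u ∧
    ∀ z : ℂ, ∀ ρ : ℝ, 0 < ρ →
      u z ≤ (2 * Real.pi)⁻¹ *
        ∫ θ in (0 : ℝ)..(2 * Real.pi), u (z + (ρ : ℂ) * Complex.exp ((θ : ℂ) * Complex.I))

/-- The (upper) type at order 1 of `u : ℂ → ℝ`:  `limsup_{z → ∞} u⁺(z)/|z|`, as an
extended real number. -/
def typeOf (u : ℂ → ℝ) : EReal :=
  Filter.limsup (fun z : ℂ => ((max (u z) 0 / ‖z‖ : ℝ) : EReal))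
    (Filter.cocompact ℂ)

/-- `u` is a subharmonic function of Cartwright class: subharmonic on `ℂ`, of finite type
at order `1`, and with finite logarithmic integral `J[u⁺] < +∞`. -/
def CartwrightClass (u : ℂ → ℝ) : Prop :=
  Subharmonic u ∧ typeOf u < ⊤ ∧
    Integrable (fun x : ℝ => max (u (x : ℂ)) 0 / (1 + x ^ 2))

/-- The exponential type of an entire function: `limsup_{z→∞} ln⁺|h(z)|/|z|`. -/
def entireType (h : ℂ → ℂ) : EReal :=
  typeOf fun z => Real.log (‖h z‖)

/-- The Poisson integral over `ℂ \ ℝ` of a density `v` on `ℝ`. -/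
def poissonIntegral (v : ℝ → ℝ) (z : ℂ) : ℝ :=
  Real.pi⁻¹ * ∫ x : ℝ, |z.im| * v x / (z.im ^ 2 + (z.re - x) ^ 2)

/-- `u` is harmonic on an (open) set `S`: continuous on `S` and satisfying the mean value
equality on all sufficiently small circles around each point of `S`. -/
def HarmonicOn (u : ℂ → ℝ) (S : Set ℂ) : Prop :=
  ContinuousOn u S ∧
    ∀ z ∈ S, ∃ r > (0 : ℝ), Metric.ball z r ⊆ S ∧
      ∀ ρ : ℝ, 0 < ρ → ρ < r →
        u z = (2 * Real.pi)⁻¹ *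
          ∫ θ in (0 : ℝ)..(2 * Real.pi), u (z + (ρ : ℂ) * Complex.exp ((θ : ℂ) * Complex.I))

/-- The `d`-dimensional Hausdorff content with variable covering radius `r`. -/
def hausdorffContentVR (d : ℝ) (r : ℂ → ℝ) (S : Set ℂ) : ℝ≥0∞ :=
  ⨅ (c : ℕ → ℂ) (ρ : ℕ → ℝ) (_ : ∀ k, 0 ≤ ρ k ∧ ρ k ≤ r (c k))
      (_ : S ⊆ ⋃ k, Metric.closedBall (c k) (ρ k)),
    ∑' k, ENNReal.ofReal (Real.pi ^ (d / 2) / Real.Gamma (1 + d / 2) * ρ k ^ d)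

open Topology

def halfPlanePoissonKernel (z : ℂ) (x : ℝ) : ℝ := |z.im| / (z.im ^ 2 + (z.re - x) ^ 2)

lemma poissonIntegral_eq_integral_halfPlanePoissonKernel_mul (v : ℝ → ℝ) (z : ℂ) :
    poissonIntegral v z = Real.pi⁻¹ * ∫ x, halfPlanePoissonKernel z x * v x := by
  simp only [poissonIntegral, halfPlanePoissonKernel, div_mul_eq_mul_div]

lemma halfPlanePoissonKernel_nonneg (z : ℂ) (x : ℝ) : 0 ≤ halfPlanePoissonKernel z x := by
  unfold halfPlanePoissonKernel; positivity

lemma measurable_halfPlanePoissonKernel (z : ℂ) : Measurable (halfPlanePoissonKernel z) := by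
  unfold halfPlanePoissonKernel; fun_prop

lemma continuousAt_halfPlanePoissonKernel (x : ℝ) {z : ℂ} (hz : z.im ≠ 0) :
    ContinuousAt (fun w => halfPlanePoissonKernel w x) z := by
  have hden : z.im ^ 2 + (z.re - x) ^ 2 ≠ 0 := by
    have := pow_pos (abs_pos.2 hz) 2
    rw [sq_abs] at this
    positivity
  unfold halfPlanePoissonKernel
  fun_prop (disch := exact hden)

lemma integral_halfPlanePoissonKernel {z : ℂ} (hz : z.im ≠ 0) :
    ∫ x, halfPlanePoissonKernel z x = Real.pi := by
  have hk : halfPlanePoissonKernel z =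
      fun x => |z.im|⁻¹ * (fun t : ℝ => (1 + t ^ 2)⁻¹) (z.im⁻¹ * (x - z.re)) := by
    funext x
    have : 0 < |z.im| := abs_pos.2 hz
    simp only [halfPlanePoissonKernel, mul_pow, inv_pow, ← sq_abs z.im]
    field_simp
    ring
  rw [hk, integral_const_mul, integral_sub_right_eq_self (fun x => (1 + (z.im⁻¹ * x) ^ 2)⁻¹),
    Measure.integral_comp_inv_mul_left (fun t : ℝ => (1 + t ^ 2)⁻¹), integral_univ_inv_one_add_sq,
    smul_eq_mul, inv_mul_cancel_left₀ (abs_pos.2 hz).ne']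

lemma one_add_sq_le_mul {a b x M η : ℝ} (hη : 0 < η) (ha : |a| ≤ M)
    (h : η ^ 2 ≤ b ^ 2 + (a - x) ^ 2) :
    1 + x ^ 2 ≤ (2 + (1 + 2 * M ^ 2) / η ^ 2) * (b ^ 2 + (a - x) ^ 2) := by
  have hx : x ^ 2 ≤ 2 * M ^ 2 + 2 * (b ^ 2 + (a - x) ^ 2) := by
    nlinarith [sq_abs a, abs_nonneg a, sq_nonneg (x - 2 * a), sq_nonneg b]
  have h1 : 1 + 2 * M ^ 2 ≤ (1 + 2 * M ^ 2) / η ^ 2 * (b ^ 2 + (a - x) ^ 2) := by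
    rw [div_mul_eq_mul_div, le_div_iff₀ (by positivity)]
    exact mul_le_mul_of_nonneg_left h (by positivity)
  linarith

lemma abs_halfPlanePoissonKernel_mul_le {z : ℂ} {x M η : ℝ} (hη : 0 < η) (hM : |z.re| ≤ M)
    (h : η ^ 2 ≤ z.im ^ 2 + (z.re - x) ^ 2) (w : ℝ) :
    |halfPlanePoissonKernel z x * w| ≤
      |z.im| * (2 + (1 + 2 * M ^ 2) / η ^ 2) * |w / (1 + x ^ 2)| := by
  have hden : 0 < z.im ^ 2 + (z.re - x) ^ 2 := (pow_pos hη 2).trans_le h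
  rw [abs_mul, abs_of_nonneg (halfPlanePoissonKernel_nonneg z x), abs_div,
    abs_of_pos (by positivity : (0 : ℝ) < 1 + x ^ 2), halfPlanePoissonKernel]
  calc |z.im| / (z.im ^ 2 + (z.re - x) ^ 2) * |w|
      = |z.im| * (|w| / (1 + x ^ 2)) * ((1 + x ^ 2) / (z.im ^ 2 + (z.re - x) ^ 2)) := by
        field_simp
    _ ≤ |z.im| * (|w| / (1 + x ^ 2)) * (2 + (1 + 2 * M ^ 2) / η ^ 2) := by
        gcongr
        rw [div_le_iff₀ hden]
        exact one_add_sq_le_mul hη hM h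
    _ = _ := by ring

lemma aestronglyMeasurable_of_integrable_div_one_add_sq {v : ℝ → ℝ}
    (hint : Integrable (fun x : ℝ => v x / (1 + x ^ 2))) : AEStronglyMeasurable v := by
  have hv : v = fun x => v x / (1 + x ^ 2) * (1 + x ^ 2) := by
    funext x; rw [div_mul_cancel₀ _ (by positivity)]
  rw [hv]
  exact hint.aestronglyMeasurable.mul (by fun_prop)

lemma integrable_halfPlanePoissonKernel_mul {v : ℝ → ℝ}
    (hint : Integrable (fun x : ℝ => v x / (1 + x ^ 2))) {z : ℂ} (hz : z.im ≠ 0) :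
    Integrable (fun x => halfPlanePoissonKernel z x * v x) := by
  refine (hint.abs.const_mul (|z.im| * (2 + (1 + 2 * |z.re| ^ 2) / |z.im| ^ 2))).mono
    ((measurable_halfPlanePoissonKernel z).aestronglyMeasurable.mul
      (aestronglyMeasurable_of_integrable_div_one_add_sq hint)) (.of_forall fun x => ?_)
  rw [Real.norm_eq_abs, Real.norm_eq_abs, abs_mul (_ * _), abs_abs,
    abs_of_nonneg (by positivity : 0 ≤ |z.im| * (2 + (1 + 2 * |z.re| ^ 2) / |z.im| ^ 2))]
  refine abs_halfPlanePoissonKernel_mul_le (abs_pos.2 hz) le_rfl ?_ _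
  rw [sq_abs]
  exact le_add_of_nonneg_right (sq_nonneg _)

lemma poissonIntegral_sub_const {v : ℝ → ℝ} (hint : Integrable (fun x : ℝ => v x / (1 + x ^ 2)))
    {z : ℂ} (hz : z.im ≠ 0) (c : ℝ) :
    poissonIntegral (fun x => v x - c) z = poissonIntegral v z - c := by
  have hk : Integrable (halfPlanePoissonKernel z) := by
    simpa using integrable_halfPlanePoissonKernel_mul (v := fun _ => 1)
      (by simpa using integrable_inv_one_add_sq) hz
  simp only [poissonIntegral_eq_integral_halfPlanePoissonKernel_mul, mul_sub]
  rw [integral_sub (integrable_halfPlanePoissonKernel_mul hint hz) (hk.mul_const c),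
    integral_mul_const, integral_halfPlanePoissonKernel hz]
  field_simp

lemma exists_poissonIntegral_le_mul_abs_im {w : ℝ → ℝ}
    (hint : Integrable (fun x : ℝ => w x / (1 + x ^ 2))) {x₀ r : ℝ} (hr : 0 < r)
    (hw : ∀ x ∈ ball x₀ r, w x ≤ 0) :
    ∃ K, ∀ z : ℂ, z.im ≠ 0 → dist z x₀ < r / 2 → poissonIntegral w z ≤ K * |z.im| := by
  set L := 2 + (1 + 2 * (|x₀| + r / 2) ^ 2) / (r / 2) ^ 2
  refine ⟨Real.pi⁻¹ * L * ∫ x, |w x / (1 + x ^ 2)|, fun z hz hzx₀ => ?_⟩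
  have hre : |z.re - x₀| < r / 2 := by
    simpa using (abs_re_le_norm (z - x₀)).trans_lt (by rwa [← dist_eq])
  have hM : |z.re| ≤ |x₀| + r / 2 := by
    linarith [abs_sub_abs_le_abs_sub z.re x₀]
  have hpointwise :
      ∀ x, halfPlanePoissonKernel z x * w x ≤ |z.im| * L * |w x / (1 + x ^ 2)| := by
    intro x
    by_cases hx : x ∈ ball x₀ r
    · exact (mul_nonpos_of_nonneg_of_nonpos (halfPlanePoissonKernel_nonneg z x) (hw x hx)).trans
        (by positivity)
    · have hfar : r ≤ |x - x₀| := by simpa [Real.dist_eq] using hx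
      have hfar' : r / 2 ≤ |z.re - x| := by
        linarith [abs_sub_le x z.re x₀, abs_sub_comm x z.re]
      refine (le_abs_self _).trans (abs_halfPlanePoissonKernel_mul_le (half_pos hr) hM ?_ _)
      nlinarith [sq_nonneg z.im, sq_abs (z.re - x)]
  calc poissonIntegral w z = Real.pi⁻¹ * ∫ x, halfPlanePoissonKernel z x * w x :=
        poissonIntegral_eq_integral_halfPlanePoissonKernel_mul w z
    _ ≤ Real.pi⁻¹ * ∫ x, |z.im| * L * |w x / (1 + x ^ 2)| := by
        gcongr
        exacts [integrable_halfPlanePoissonKernel_mul hint hz, hint.abs.const_mul _, hpointwise]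
    _ = Real.pi⁻¹ * L * (∫ x, |w x / (1 + x ^ 2)|) * |z.im| := by
        rw [integral_const_mul]; ring

lemma UpperSemicontinuousAt.eventually_poissonIntegral_lt {v : ℝ → ℝ} {x₀ y : ℝ}
    (hv : UpperSemicontinuousAt v x₀) (hint : Integrable (fun x : ℝ => v x / (1 + x ^ 2)))
    (hy : v x₀ < y) :
    ∀ᶠ z in 𝓝 (x₀ : ℂ), z.im ≠ 0 → poissonIntegral v z < y := by
  obtain ⟨y', hvy', hy'y⟩ := exists_between hy
  obtain ⟨r, hr, hball⟩ := Metric.eventually_nhds_iff.1 (hv y' hvy')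
  have hint' : Integrable (fun x : ℝ => (v x - y') / (1 + x ^ 2)) := by
    refine (hint.sub (integrable_inv_one_add_sq.const_mul y')).congr (.of_forall fun x => ?_)
    simp only [Pi.sub_apply]
    ring
  obtain ⟨K, hK⟩ := exists_poissonIntegral_le_mul_abs_im hint' hr
    fun x hx => sub_nonpos.2 (hball hx).le
  have hsmall : ∀ᶠ z in 𝓝 (x₀ : ℂ), K * |z.im| < y - y' := by
    refine (Continuous.continuousAt (by fun_prop)).eventually_lt continuousAt_const ?_
    simpa using hy'y
  filter_upwards [hsmall, ball_mem_nhds (x₀ : ℂ) (half_pos hr)] with z hzK hzx₀ hz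
  have := hK z hz hzx₀
  rw [poissonIntegral_sub_const hint hz] at this
  linarith

lemma continuousAt_poissonIntegral {v : ℝ → ℝ}
    (hint : Integrable (fun x : ℝ => v x / (1 + x ^ 2))) {z₀ : ℂ} (hz₀ : z₀.im ≠ 0) :
    ContinuousAt (poissonIntegral v) z₀ := by
  set δ := |z₀.im| / 2 with hδ_def
  have hδ : 0 < δ := half_pos (abs_pos.2 hz₀)
  set M := ‖z₀‖ + δ
  have hnear : ∀ z ∈ ball z₀ δ, δ ≤ |z.im| ∧ |z.re| ≤ M ∧ |z.im| ≤ M := by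
    intro z hz
    have hzM : ‖z‖ ≤ M := (norm_lt_of_mem_ball hz).le
    have hzz₀ : |z.im - z₀.im| < δ := by
      simpa using (abs_im_le_norm (z - z₀)).trans_lt (by rwa [← dist_eq])
    refine ⟨?_, (abs_re_le_norm z).trans hzM, (abs_im_le_norm z).trans hzM⟩
    linarith [abs_sub_abs_le_abs_sub z₀.im z.im, abs_sub_comm z₀.im z.im, hδ_def]
  have hintegral : ContinuousAt (fun z => ∫ x, halfPlanePoissonKernel z x * v x) z₀ := by
    refine continuousAt_of_dominated
      (bound := fun x => M * (2 + (1 + 2 * M ^ 2) / δ ^ 2) * |v x / (1 + x ^ 2)|)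
      (.of_forall fun z => (measurable_halfPlanePoissonKernel z).aestronglyMeasurable.mul
        (aestronglyMeasurable_of_integrable_div_one_add_sq hint)) ?_
      (hint.abs.const_mul _) (.of_forall fun x => (continuousAt_halfPlanePoissonKernel x hz₀).mul
        continuousAt_const)
    filter_upwards [ball_mem_nhds z₀ hδ] with z hz
    refine .of_forall fun x => ?_
    obtain ⟨hδz, hzre, hzim⟩ := hnear z hz
    have hfar : δ ^ 2 ≤ z.im ^ 2 + (z.re - x) ^ 2 := by
      nlinarith [sq_abs z.im, sq_nonneg (z.re - x)]
    rw [Real.norm_eq_abs]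
    exact (abs_halfPlanePoissonKernel_mul_le hδ hzre hfar _).trans (by gcongr)
  rw [funext (poissonIntegral_eq_integral_halfPlanePoissonKernel_mul v)]
  exact continuousAt_const.mul hintegral

def poissonExtension (v : ℝ → ℝ) (z : ℂ) : ℝ :=
  if z.im = 0 then v z.re else poissonIntegral v z

lemma poissonExtension_neg (v : ℝ → ℝ) :
    poissonExtension (fun x => -v x) = -poissonExtension v := by
  funext z
  simp only [poissonExtension, poissonIntegral, Pi.neg_apply, mul_neg, neg_div, integral_neg]
  split_ifs <;> rfl

lemma upperSemicontinuous_poissonExtension {v : ℝ → ℝ} (hv : UpperSemicontinuous v)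
    (hint : Integrable (fun x : ℝ => v x / (1 + x ^ 2))) :
    UpperSemicontinuous (poissonExtension v) := by
  intro z₀
  by_cases hz₀ : z₀.im = 0
  · obtain ⟨x₀, rfl⟩ : ∃ x₀ : ℝ, (x₀ : ℂ) = z₀ := ⟨z₀.re, Complex.ext rfl hz₀.symm⟩
    intro y hy
    simp only [poissonExtension, ofReal_im, ofReal_re, if_true] at hy
    have hre : ∀ᶠ z in 𝓝 (x₀ : ℂ), v z.re < y :=
      (continuous_re.tendsto' _ _ (ofReal_re x₀)).eventually (hv x₀ y hy)
    filter_upwards [hre, UpperSemicontinuousAt.eventually_poissonIntegral_lt (hv x₀) hint hy]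
      with z hzre hz
    unfold poissonExtension
    split_ifs with him
    exacts [hzre, hz him]
  · have hext : poissonExtension v =ᶠ[𝓝 z₀] poissonIntegral v := by
      filter_upwards [isOpen_ne_fun continuous_im continuous_const |>.mem_nhds hz₀] with z hz
      exact if_neg hz
    exact ((continuousAt_poissonIntegral hint hz₀).congr hext.symm).upperSemicontinuousAt

theorem statement10 (v : ℝ → ℝ) (hv : UpperSemicontinuous v)
    (hint : Integrable (fun x : ℝ => v x / (1 + x ^ 2)))
    (P : ℂ → ℝ)
    (hP : ∀ z : ℂ, P z = if z.im = 0 then v z.re else poissonIntegral v z) :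
    UpperSemicontinuous P ∧ (Continuous v → Continuous P) := by
  obtain rfl : P = poissonExtension v := funext hP
  refine ⟨upperSemicontinuous_poissonExtension hv hint, fun hcont => ?_⟩
  have hint_neg : Integrable (fun x : ℝ => -v x / (1 + x ^ 2)) :=
    hint.neg.congr (.of_forall fun x => (neg_div _ _).symm)
  have husc_neg : UpperSemicontinuous (-poissonExtension v) := by
    rw [← poissonExtension_neg]
    exact upperSemicontinuous_poissonExtension hcont.neg.upperSemicontinuous hint_neg
  refine continuous_iff_lower_upperSemicontinuous.2
    ⟨?_, upperSemicontinuous_poissonExtension hv hint⟩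
  have := continuous_neg.comp_upperSemicontinuous_antitone husc_neg fun _ _ => neg_le_neg
  rwa [Function.comp_def, ← Pi.neg_def, neg_neg] at this

end
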